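/- arXiv:2202.05068 — 2 statements merged into one kernel-verified Lean document; each statement's English description precedes it below -/
import Mathlib

section
/- Let f : ℝ^d → ℝ^o be the degree-k CCP polynomial network f(z) = C (U₁z ∘ ⋯ ∘ U_kz). Then its ℓ∞-Lipschitz constant on the unit ℓ∞-ball satisfies Lip_∞(f) ≤ k ‖C‖_∞ ∏_{i=1}^k ‖U_i‖_∞, where ‖·‖_∞ is the maximum row ℓ₁-norm. -/
open Matrix

/-- The `ℓ∞`-norm of a vector: maximum absolute value of its entries. -/
noncomputable def linfNorm {n : Type*} [Fintype n] (x : n → ℝ) : ℝ := ⨆ i, |x i|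

/-- The `ℓ∞`-operator norm of a matrix: the maximum `ℓ₁`-norm of its rows. -/
noncomputable def linfOpNorm {I J : Type*} [Fintype I] [Fintype J] (A : Matrix I J ℝ) : ℝ :=
  ⨆ i, ∑ j, |A i j|

lemma linfNorm_nonneg {n : Type*} [Fintype n] (x : n → ℝ) : 0 ≤ linfNorm x := by
  rcases isEmpty_or_nonempty n with h | h
  · simp [linfNorm, Real.iSup_of_isEmpty]
  · exact le_ciSup_of_le (Set.Finite.bddAbove (Set.finite_range _)) h.some (abs_nonneg _)

lemma abs_le_linfNorm {n : Type*} [Fintype n] (x : n → ℝ) (i : n) :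
    |x i| ≤ linfNorm x := by
  exact le_ciSup (f := fun i => |x i|) (Set.Finite.bddAbove (Set.finite_range _)) i

lemma linfOpNorm_nonneg {I J : Type*} [Fintype I] [Fintype J] (A : Matrix I J ℝ) :
    0 ≤ linfOpNorm A := by
  rcases isEmpty_or_nonempty I with h | h
  · simp [linfOpNorm, Real.iSup_of_isEmpty]
  · exact le_ciSup_of_le (Set.Finite.bddAbove (Set.finite_range _)) h.some
      (Finset.sum_nonneg fun _ _ => abs_nonneg _)

lemma row_le_linfOpNorm {I J : Type*} [Fintype I] [Fintype J] (A : Matrix I J ℝ) (i : I) :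
    ∑ j, |A i j| ≤ linfOpNorm A := by
  exact le_ciSup (f := fun i => ∑ j, |A i j|) (Set.Finite.bddAbove (Set.finite_range _)) i

lemma abs_mulVec_le {I J : Type*} [Fintype I] [Fintype J] (A : Matrix I J ℝ) (x : J → ℝ)
    (i : I) : |A.mulVec x i| ≤ linfOpNorm A * linfNorm x := by
  calc |A.mulVec x i| = |∑ j, A i j * x j| := rfl
    _ ≤ ∑ j, |A i j * x j| := Finset.abs_sum_le_sum_abs _ _
    _ ≤ ∑ j, |A i j| * linfNorm x := by
        refine Finset.sum_le_sum fun j _ => ?_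
        rw [abs_mul]
        exact mul_le_mul_of_nonneg_left (abs_le_linfNorm x j) (abs_nonneg _)
    _ = (∑ j, |A i j|) * linfNorm x := by rw [Finset.sum_mul]
    _ ≤ linfOpNorm A * linfNorm x :=
        mul_le_mul_of_nonneg_right (row_le_linfOpNorm A i) (linfNorm_nonneg x)

lemma abs_prod_sub_prod_le {ι : Type*} [DecidableEq ι] (s : Finset ι) (a b R : ι → ℝ)
    (hR : ∀ i, 0 ≤ R i) (ha : ∀ i, |a i| ≤ R i) (hb : ∀ i, |b i| ≤ R i) :
    |∏ i ∈ s, a i - ∏ i ∈ s, b i| ≤ ∑ i ∈ s, |a i - b i| * ∏ j ∈ s.erase i, R j := by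
  induction s using Finset.induction with
  | empty => simp
  | @insert x t hx ih =>
    rw [Finset.prod_insert hx, Finset.prod_insert hx, Finset.sum_insert hx]
    have key : a x * ∏ i ∈ t, a i - b x * ∏ i ∈ t, b i
        = a x * (∏ i ∈ t, a i - ∏ i ∈ t, b i) + (a x - b x) * ∏ i ∈ t, b i := by ring
    rw [key]
    have hQ : |∏ i ∈ t, b i| ≤ ∏ i ∈ t, R i := by
      rw [Finset.abs_prod]
      exact Finset.prod_le_prod (fun i _ => abs_nonneg _) (fun i _ => hb i)
    calc |a x * (∏ i ∈ t, a i - ∏ i ∈ t, b i) + (a x - b x) * ∏ i ∈ t, b i|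
        ≤ |a x| * |∏ i ∈ t, a i - ∏ i ∈ t, b i| + |a x - b x| * |∏ i ∈ t, b i| := by
          rw [← abs_mul, ← abs_mul]
          exact abs_add_le (a x * (∏ i ∈ t, a i - ∏ i ∈ t, b i)) ((a x - b x) * ∏ i ∈ t, b i)
      _ ≤ R x * (∑ i ∈ t, |a i - b i| * ∏ j ∈ t.erase i, R j)
            + |a x - b x| * ∏ i ∈ t, R i := by
          exact add_le_add (mul_le_mul (ha x) ih (abs_nonneg _) (hR x))
            (mul_le_mul_of_nonneg_left hQ (abs_nonneg _))
      _ = |a x - b x| * ∏ j ∈ (insert x t).erase x, R j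
            + ∑ i ∈ t, |a i - b i| * ∏ j ∈ (insert x t).erase i, R j := by
          rw [Finset.erase_insert hx, Finset.mul_sum, add_comm]
          congr 1
          refine Finset.sum_congr rfl fun i hi => ?_
          have hix : i ≠ x := fun h => hx (h ▸ hi)
          rw [Finset.erase_insert_of_ne (Ne.symm hix),
            Finset.prod_insert (fun h => hx (Finset.mem_of_mem_erase h))]
          ring

/-- The `ℓ∞`-Lipschitz constant of the degree-`k` CCP network
`f(z) = C (U₁z ∘ ⋯ ∘ U_kz)` on the unit `ℓ∞`-ball is at most
`k ‖C‖_∞ ∏_{i=1}^k ‖U_i‖_∞`. -/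
theorem ccp_lipschitz_linf {d m o k : ℕ}
    (C : Matrix (Fin o) (Fin m) ℝ) (U : Fin k → Matrix (Fin m) (Fin d) ℝ) :
    ∀ z₁ z₂ : Fin d → ℝ, linfNorm z₁ ≤ 1 → linfNorm z₂ ≤ 1 →
      linfNorm (C.mulVec (fun j => ∏ i, (U i).mulVec z₁ j) -
                C.mulVec (fun j => ∏ i, (U i).mulVec z₂ j)) ≤
        (k : ℝ) * linfOpNorm C * (∏ i, linfOpNorm (U i)) * linfNorm (z₁ - z₂) := by
  intro z₁ z₂ hz₁ hz₂
  set D := linfNorm (z₁ - z₂) with hD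
  have hDnn : 0 ≤ D := linfNorm_nonneg _
  set R : Fin k → ℝ := fun i => linfOpNorm (U i) with hRdef
  have hRnn : ∀ i, 0 ≤ R i := fun i => linfOpNorm_nonneg _
  have hprodnn : 0 ≤ ∏ i, R i := Finset.prod_nonneg fun i _ => hRnn i
  have hCnn : 0 ≤ linfOpNorm C := linfOpNorm_nonneg _
  -- bound on each coordinate of the product difference
  have hg : ∀ j : Fin m, |(∏ i, (U i).mulVec z₁ j) - ∏ i, (U i).mulVec z₂ j|
      ≤ (k : ℝ) * (∏ i, R i) * D := by
    intro j
    have ha : ∀ i, |(U i).mulVec z₁ j| ≤ R i := fun i => by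
      calc |(U i).mulVec z₁ j| ≤ linfOpNorm (U i) * linfNorm z₁ := abs_mulVec_le _ _ _
        _ ≤ linfOpNorm (U i) * 1 := by gcongr; exact linfOpNorm_nonneg _
        _ = R i := mul_one _
    have hb : ∀ i, |(U i).mulVec z₂ j| ≤ R i := fun i => by
      calc |(U i).mulVec z₂ j| ≤ linfOpNorm (U i) * linfNorm z₂ := abs_mulVec_le _ _ _
        _ ≤ linfOpNorm (U i) * 1 := by gcongr; exact linfOpNorm_nonneg _
        _ = R i := mul_one _
    calc |(∏ i, (U i).mulVec z₁ j) - ∏ i, (U i).mulVec z₂ j|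
        ≤ ∑ i, |(U i).mulVec z₁ j - (U i).mulVec z₂ j| * ∏ l ∈ Finset.univ.erase i, R l :=
          abs_prod_sub_prod_le Finset.univ _ _ R hRnn ha hb
      _ ≤ ∑ i : Fin k, (R i * D) * ∏ l ∈ Finset.univ.erase i, R l := by
          refine Finset.sum_le_sum fun i _ => ?_
          refine mul_le_mul_of_nonneg_right ?_
            (Finset.prod_nonneg fun l _ => hRnn l)
          have : (U i).mulVec z₁ j - (U i).mulVec z₂ j = (U i).mulVec (z₁ - z₂) j := by
            rw [Matrix.mulVec_sub]; rfl
          rw [this]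
          exact abs_mulVec_le _ _ _
      _ = ∑ i : Fin k, (∏ l, R l) * D := by
          refine Finset.sum_congr rfl fun i _ => ?_
          rw [← Finset.mul_prod_erase Finset.univ R (Finset.mem_univ i)]
          ring
      _ = (k : ℝ) * (∏ i, R i) * D := by
          rw [Finset.sum_const, Finset.card_univ, Fintype.card_fin, nsmul_eq_mul]
          ring
  have hrhs : 0 ≤ (k : ℝ) * linfOpNorm C * (∏ i, linfOpNorm (U i)) * D :=
    mul_nonneg (mul_nonneg (mul_nonneg (Nat.cast_nonneg k) hCnn) hprodnn) hDnn
  refine Real.iSup_le (fun i => ?_) hrhs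
  have : (C.mulVec (fun j => ∏ i, (U i).mulVec z₁ j) -
      C.mulVec (fun j => ∏ i, (U i).mulVec z₂ j)) i
      = ∑ j, C i j * ((∏ l, (U l).mulVec z₁ j) - ∏ l, (U l).mulVec z₂ j) := by
    simp [Matrix.mulVec, dotProduct, ← Finset.sum_sub_distrib, mul_sub]
  rw [this]
  calc |∑ j, C i j * ((∏ l, (U l).mulVec z₁ j) - ∏ l, (U l).mulVec z₂ j)|
      ≤ ∑ j, |C i j| * |(∏ l, (U l).mulVec z₁ j) - ∏ l, (U l).mulVec z₂ j| := by
        refine le_trans (Finset.abs_sum_le_sum_abs _ _) ?_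
        exact le_of_eq (Finset.sum_congr rfl fun j _ => abs_mul _ _)
    _ ≤ ∑ j, |C i j| * ((k : ℝ) * (∏ l, R l) * D) := by
        refine Finset.sum_le_sum fun j _ => ?_
        exact mul_le_mul_of_nonneg_left (hg j) (abs_nonneg _)
    _ = (∑ j, |C i j|) * ((k : ℝ) * (∏ l, R l) * D) := by rw [Finset.sum_mul]
    _ ≤ linfOpNorm C * ((k : ℝ) * (∏ l, R l) * D) := by
        refine mul_le_mul_of_nonneg_right (row_le_linfOpNorm C i) ?_
        positivity
    _ = (k : ℝ) * linfOpNorm C * (∏ l, linfOpNorm (U l)) * D := by ring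
end

section
/- Let f : ℝ^d → ℝ^o be the degree-k NCP polynomial network defined recursively by x₁ = (A₁z) ∘ s₁, x_n = (A_n z) ∘ (S_n x_{n-1}) for 2 ≤ n ≤ k, and f(z) = C x_k. Then its Lipschitz constant with respect to the ℓ_p norm on the unit ℓ_p-ball satisfies Lip_p(f) ≤ k ‖C‖_p ∏_{i=1}^k ‖A_i‖_p ‖S_i‖_p (interpreting ‖S₁‖_p as ‖diag(s₁)‖_p). -/
open Matrix
open scoped ENNReal

/-- The `ℓ_p`-norm of a vector in `ℝ^n`. -/
noncomputable def pNorm (p : ℝ≥0∞) {n : Type*} [Fintype n] (x : n → ℝ) : ℝ :=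
  ‖(WithLp.equiv p (n → ℝ)).symm x‖

/-- The induced `ℓ_p`-operator norm of a matrix. -/
noncomputable def pOpNorm (p : ℝ≥0∞) {a b : Type*} [Fintype a] [Fintype b]
    (A : Matrix a b ℝ) : ℝ :=
  ⨆ x : {x : b → ℝ // pNorm p x ≤ 1}, pNorm p (A.mulVec x.1)

section Aux

variable {p : ℝ≥0∞} {n : Type*} [Fintype n]

lemma pNorm_nonneg (hp : 1 ≤ p) (v : n → ℝ) : 0 ≤ pNorm p v := by
  haveI : Fact (1 ≤ p) := ⟨hp⟩
  unfold pNorm; exact norm_nonneg _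

lemma pNorm_smul (hp : 1 ≤ p) (c : ℝ) (v : n → ℝ) : pNorm p (c • v) = |c| * pNorm p v := by
  haveI : Fact (1 ≤ p) := ⟨hp⟩
  unfold pNorm
  rw [show (WithLp.equiv p (n → ℝ)).symm (c • v) = c • (WithLp.equiv p (n → ℝ)).symm v from rfl]
  rw [norm_smul c ((WithLp.equiv p (n → ℝ)).symm v), Real.norm_eq_abs]

lemma pNorm_add_le (hp : 1 ≤ p) (u v : n → ℝ) :
    pNorm p (u + v) ≤ pNorm p u + pNorm p v := by
  haveI : Fact (1 ≤ p) := ⟨hp⟩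
  unfold pNorm
  rw [show (WithLp.equiv p (n → ℝ)).symm (u + v) = (WithLp.equiv p (n → ℝ)).symm u + (WithLp.equiv p (n → ℝ)).symm v from rfl]
  exact norm_add_le _ _

lemma pNorm_eq_zero (hp : 1 ≤ p) {v : n → ℝ} (h : pNorm p v = 0) : v = 0 := by
  haveI : Fact (1 ≤ p) := ⟨hp⟩
  unfold pNorm at h
  have := norm_eq_zero.mp h
  simpa using congrArg (WithLp.equiv p (n → ℝ)) this

lemma pNorm_mono (hp : 1 ≤ p) {u v : n → ℝ} (h : ∀ j, |u j| ≤ |v j|) :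
    pNorm p u ≤ pNorm p v := by
  haveI : Fact (1 ≤ p) := ⟨hp⟩
  rcases eq_or_ne p ∞ with hpt | hpt
  · subst hpt
    unfold pNorm
    rw [PiLp.norm_eq_ciSup, PiLp.norm_eq_ciSup]
    refine Real.iSup_le (fun i => ?_) (Real.iSup_nonneg fun i => norm_nonneg _)
    refine le_trans ?_
      (le_ciSup (f := fun i => ‖(WithLp.equiv ⊤ (n → ℝ)).symm v i‖)
        (Set.Finite.bddAbove (Set.finite_range _)) i)
    simpa [WithLp.equiv_symm_apply, PiLp.toLp_apply, Real.norm_eq_abs] using h i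
  · have hq : 0 < p.toReal := ENNReal.toReal_pos (by intro h0; simp [h0] at hp) hpt
    unfold pNorm
    rw [PiLp.norm_eq_sum hq, PiLp.norm_eq_sum hq]
    apply Real.rpow_le_rpow (Finset.sum_nonneg fun i _ => Real.rpow_nonneg (norm_nonneg _) _)
      (Finset.sum_le_sum fun i _ => ?_) (by positivity)
    exact Real.rpow_le_rpow (norm_nonneg _)
      (by simpa [WithLp.equiv_symm_apply, PiLp.toLp_apply, Real.norm_eq_abs] using h i) hq.le

lemma abs_le_pNorm (hp : 1 ≤ p) (v : n → ℝ) (j : n) : |v j| ≤ pNorm p v := by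
  haveI : Fact (1 ≤ p) := ⟨hp⟩
  rcases eq_or_ne p ∞ with hpt | hpt
  · subst hpt
    unfold pNorm
    rw [PiLp.norm_eq_ciSup]
    refine le_trans ?_
      (le_ciSup (f := fun i => ‖(WithLp.equiv ⊤ (n → ℝ)).symm v i‖)
        (Set.Finite.bddAbove (Set.finite_range _)) j)
    simp [WithLp.equiv_symm_apply, PiLp.toLp_apply, Real.norm_eq_abs]
  · have hq : 0 < p.toReal := ENNReal.toReal_pos (by intro h0; simp [h0] at hp) hpt
    unfold pNorm
    rw [PiLp.norm_eq_sum hq]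
    have h1 : |v j| = (|v j| ^ p.toReal) ^ (1 / p.toReal) := by
      rw [one_div, Real.rpow_rpow_inv (abs_nonneg _) hq.ne']
    rw [h1]
    refine Real.rpow_le_rpow (Real.rpow_nonneg (abs_nonneg _) _) ?_ (by positivity)
    refine le_trans (le_of_eq ?_)
      (Finset.single_le_sum (f := fun i => ‖(WithLp.equiv p (n → ℝ)).symm v i‖ ^ p.toReal)
        (fun i _ => Real.rpow_nonneg (norm_nonneg _) _) (Finset.mem_univ j))
    simp [WithLp.equiv_symm_apply, PiLp.toLp_apply, Real.norm_eq_abs]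

lemma pNorm_hadamard (hp : 1 ≤ p) (u v : n → ℝ) :
    pNorm p (fun j => u j * v j) ≤ pNorm p u * pNorm p v := by
  have h1 : pNorm p (fun j => u j * v j) ≤ pNorm p (fun j => pNorm p u * v j) := by
    refine pNorm_mono hp fun j => ?_
    rw [abs_mul, abs_mul, abs_of_nonneg (pNorm_nonneg hp u)]
    exact mul_le_mul_of_nonneg_right (abs_le_pNorm hp u j) (abs_nonneg _)
  refine h1.trans ?_
  have h2 : (fun j => pNorm p u * v j) = (pNorm p u) • v := rfl
  rw [h2, pNorm_smul hp, abs_of_nonneg (pNorm_nonneg hp u)]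

lemma pNorm_zero (hp : 1 ≤ p) : pNorm p (0 : n → ℝ) = 0 := by
  haveI : Fact (1 ≤ p) := ⟨hp⟩
  unfold pNorm
  show ‖(0 : WithLp p (n → ℝ))‖ = 0
  exact norm_zero

lemma pOpNorm_nonneg (hp : 1 ≤ p) {a b : Type*} [Fintype a] [Fintype b] (A : Matrix a b ℝ) :
    0 ≤ pOpNorm p A :=
  Real.iSup_nonneg fun x => pNorm_nonneg hp _

lemma pNorm_mulVec_le (hp : 1 ≤ p) {a b : Type*} [Fintype a] [Fintype b]
    (A : Matrix a b ℝ) (v : b → ℝ) :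
    pNorm p (A.mulVec v) ≤ pOpNorm p A * pNorm p v := by
  haveI : Fact (1 ≤ p) := ⟨hp⟩
  set g₀ : WithLp p (b → ℝ) →ₗ[ℝ] WithLp p (a → ℝ) :=
    (WithLp.linearEquiv p ℝ (a → ℝ)).symm.toLinearMap ∘ₗ A.mulVecLin ∘ₗ
      (WithLp.linearEquiv p ℝ (b → ℝ)).toLinearMap with hg₀
  set g := LinearMap.toContinuousLinearMap g₀ with hg
  have key : ∀ w : b → ℝ, pNorm p (A.mulVec w) = ‖g ((WithLp.equiv p (b → ℝ)).symm w)‖ := by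
    intro w; rfl
  have bdd : BddAbove (Set.range fun x : {x : b → ℝ // pNorm p x ≤ 1} =>
      pNorm p (A.mulVec x.1)) := by
    refine ⟨‖g‖, ?_⟩
    rintro _ ⟨y, rfl⟩
    show pNorm p (A.mulVec y.1) ≤ ‖g‖
    rw [key]
    refine le_trans (g.le_opNorm _) (mul_le_of_le_one_right (norm_nonneg g) y.2)
  have unit : ∀ w : b → ℝ, pNorm p w ≤ 1 → pNorm p (A.mulVec w) ≤ pOpNorm p A := by
    intro w hw
    exact le_ciSup bdd (⟨w, hw⟩ : {x : b → ℝ // pNorm p x ≤ 1})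
  rcases eq_or_lt_of_le (pNorm_nonneg hp v) with h0 | h0
  · have hv : v = 0 := pNorm_eq_zero hp h0.symm
    rw [← h0, mul_zero, hv, Matrix.mulVec_zero, pNorm_zero hp]
  · set t := pNorm p v with ht
    have h1 : pNorm p (t⁻¹ • v) ≤ 1 := by
      rw [pNorm_smul hp, abs_of_nonneg (inv_nonneg.mpr h0.le), inv_mul_cancel₀ h0.ne']
    have h2 := unit _ h1
    rw [Matrix.mulVec_smul, pNorm_smul hp, abs_of_nonneg (inv_nonneg.mpr h0.le)] at h2
    calc pNorm p (A.mulVec v) = t * (t⁻¹ * pNorm p (A.mulVec v)) := by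
          field_simp
      _ ≤ t * pOpNorm p A := by
          exact mul_le_mul_of_nonneg_left h2 h0.le
      _ = pOpNorm p A * t := mul_comm _ _

end Aux

lemma ncp_key (p : ℝ≥0∞) (hp : 1 ≤ p) {d m : ℕ}
    (A : ℕ → Matrix (Fin m) (Fin d) ℝ)
    (S : ℕ → Matrix (Fin m) (Fin m) ℝ) (s₁ : Fin m → ℝ)
    (x : (Fin d → ℝ) → ℕ → Fin m → ℝ)
    (hx1 : ∀ z, x z 1 = fun j => (A 1).mulVec z j * s₁ j)
    (hxn : ∀ z n, 1 ≤ n →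
      x z (n + 1) = fun j => (A (n + 1)).mulVec z j * (S (n + 1)).mulVec (x z n) j) :
    ∀ n, 1 ≤ n →
      (∀ z, pNorm p z ≤ 1 → pNorm p (x z n) ≤
        ∏ i ∈ Finset.Icc 1 n,
          pOpNorm p (A i) * pOpNorm p (if i = 1 then Matrix.diagonal s₁ else S i)) ∧
      (∀ z₁ z₂, pNorm p z₁ ≤ 1 → pNorm p z₂ ≤ 1 →
        pNorm p (x z₁ n - x z₂ n) ≤
          (n : ℝ) * (∏ i ∈ Finset.Icc 1 n,
            pOpNorm p (A i) * pOpNorm p (if i = 1 then Matrix.diagonal s₁ else S i)) *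
          pNorm p (z₁ - z₂)) := by
  intro n hn
  induction n, hn using Nat.le_induction with
  | base =>
    have hprod : (∏ i ∈ Finset.Icc 1 1,
        pOpNorm p (A i) * pOpNorm p (if i = 1 then Matrix.diagonal s₁ else S i)) =
        pOpNorm p (A 1) * pOpNorm p (Matrix.diagonal s₁) := by
      simp
    have hx1' : ∀ z, x z 1 = (Matrix.diagonal s₁).mulVec ((A 1).mulVec z) := by
      intro z
      rw [hx1 z]
      funext j
      rw [Matrix.mulVec_diagonal]
      ring
    constructor
    · intro z hz
      rw [hprod, hx1']
      calc pNorm p ((Matrix.diagonal s₁).mulVec ((A 1).mulVec z))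
          ≤ pOpNorm p (Matrix.diagonal s₁) * pNorm p ((A 1).mulVec z) :=
            pNorm_mulVec_le hp _ _
        _ ≤ pOpNorm p (Matrix.diagonal s₁) * (pOpNorm p (A 1) * pNorm p z) :=
            mul_le_mul_of_nonneg_left (pNorm_mulVec_le hp _ _) (pOpNorm_nonneg hp _)
        _ ≤ pOpNorm p (Matrix.diagonal s₁) * (pOpNorm p (A 1) * 1) := by
            refine mul_le_mul_of_nonneg_left ?_ (pOpNorm_nonneg hp _)
            exact mul_le_mul_of_nonneg_left hz (pOpNorm_nonneg hp _)
        _ = pOpNorm p (A 1) * pOpNorm p (Matrix.diagonal s₁) := by ring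
    · intro z₁ z₂ hz₁ hz₂
      have hsub : x z₁ 1 - x z₂ 1 = (Matrix.diagonal s₁).mulVec ((A 1).mulVec (z₁ - z₂)) := by
        rw [hx1' z₁, hx1' z₂, ← Matrix.mulVec_sub, ← Matrix.mulVec_sub]
      rw [hprod, hsub]
      calc pNorm p ((Matrix.diagonal s₁).mulVec ((A 1).mulVec (z₁ - z₂)))
          ≤ pOpNorm p (Matrix.diagonal s₁) * pNorm p ((A 1).mulVec (z₁ - z₂)) :=
            pNorm_mulVec_le hp _ _
        _ ≤ pOpNorm p (Matrix.diagonal s₁) * (pOpNorm p (A 1) * pNorm p (z₁ - z₂)) :=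
            mul_le_mul_of_nonneg_left (pNorm_mulVec_le hp _ _) (pOpNorm_nonneg hp _)
        _ = (1 : ℝ) * (pOpNorm p (A 1) * pOpNorm p (Matrix.diagonal s₁)) *
              pNorm p (z₁ - z₂) := by ring
      norm_num
  | succ n hn ih =>
    obtain ⟨hb, hd⟩ := ih
    set Pn := ∏ i ∈ Finset.Icc 1 n,
      pOpNorm p (A i) * pOpNorm p (if i = 1 then Matrix.diagonal s₁ else S i) with hPn
    have hP0 : 0 ≤ Pn :=
      Finset.prod_nonneg fun i _ => mul_nonneg (pOpNorm_nonneg hp _) (pOpNorm_nonneg hp _)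
    have hA0 : 0 ≤ pOpNorm p (A (n + 1)) := pOpNorm_nonneg hp _
    have hS0 : 0 ≤ pOpNorm p (S (n + 1)) := pOpNorm_nonneg hp _
    have hprod : (∏ i ∈ Finset.Icc 1 (n + 1),
        pOpNorm p (A i) * pOpNorm p (if i = 1 then Matrix.diagonal s₁ else S i)) =
        Pn * (pOpNorm p (A (n + 1)) * pOpNorm p (S (n + 1))) := by
      rw [Finset.prod_Icc_succ_top (by omega : 1 ≤ n + 1), if_neg (by omega)]
    have hAz : ∀ z : Fin d → ℝ, pNorm p z ≤ 1 →
        pNorm p ((A (n + 1)).mulVec z) ≤ pOpNorm p (A (n + 1)) :=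
      fun z hz => (pNorm_mulVec_le hp _ _).trans (mul_le_of_le_one_right hA0 hz)
    constructor
    · intro z hz
      rw [hprod, hxn z n hn]
      calc pNorm p (fun j => (A (n + 1)).mulVec z j * (S (n + 1)).mulVec (x z n) j)
          ≤ pNorm p ((A (n + 1)).mulVec z) * pNorm p ((S (n + 1)).mulVec (x z n)) :=
            pNorm_hadamard hp _ _
        _ ≤ pOpNorm p (A (n + 1)) * (pOpNorm p (S (n + 1)) * Pn) := by
            refine mul_le_mul (hAz z hz) ?_ (pNorm_nonneg hp _) hA0
            exact (pNorm_mulVec_le hp _ _).trans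
              (mul_le_mul_of_nonneg_left (hb z hz) hS0)
        _ = Pn * (pOpNorm p (A (n + 1)) * pOpNorm p (S (n + 1))) := by ring
    · intro z₁ z₂ hz₁ hz₂
      set δ := pNorm p (z₁ - z₂) with hδ
      have hδ0 : 0 ≤ δ := pNorm_nonneg hp _
      have hD : x z₁ (n + 1) - x z₂ (n + 1) =
          (fun j => (A (n + 1)).mulVec z₁ j *
            (S (n + 1)).mulVec (x z₁ n - x z₂ n) j) +
          (fun j => (A (n + 1)).mulVec (z₁ - z₂) j *
            (S (n + 1)).mulVec (x z₂ n) j) := by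
        funext j
        simp only [Pi.sub_apply, Pi.add_apply, hxn z₁ n hn, hxn z₂ n hn,
          Matrix.mulVec_sub, Pi.sub_apply]
        ring
      have hT1 : pNorm p (fun j => (A (n + 1)).mulVec z₁ j *
          (S (n + 1)).mulVec (x z₁ n - x z₂ n) j) ≤
          pOpNorm p (A (n + 1)) * (pOpNorm p (S (n + 1)) * ((n : ℝ) * Pn * δ)) := by
        refine (pNorm_hadamard hp _ _).trans ?_
        refine mul_le_mul (hAz z₁ hz₁) ?_ (pNorm_nonneg hp _) hA0
        exact (pNorm_mulVec_le hp _ _).trans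
          (mul_le_mul_of_nonneg_left (hd z₁ z₂ hz₁ hz₂) hS0)
      have hT2 : pNorm p (fun j => (A (n + 1)).mulVec (z₁ - z₂) j *
          (S (n + 1)).mulVec (x z₂ n) j) ≤
          (pOpNorm p (A (n + 1)) * δ) * (pOpNorm p (S (n + 1)) * Pn) := by
        refine (pNorm_hadamard hp _ _).trans ?_
        refine mul_le_mul (pNorm_mulVec_le hp _ _) ?_ (pNorm_nonneg hp _)
          (mul_nonneg hA0 hδ0)
        exact (pNorm_mulVec_le hp _ _).trans
          (mul_le_mul_of_nonneg_left (hb z₂ hz₂) hS0)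
      rw [hprod, hD]
      calc pNorm p _ ≤ _ + _ := pNorm_add_le hp _ _
        _ ≤ pOpNorm p (A (n + 1)) * (pOpNorm p (S (n + 1)) * ((n : ℝ) * Pn * δ)) +
            (pOpNorm p (A (n + 1)) * δ) * (pOpNorm p (S (n + 1)) * Pn) :=
          add_le_add hT1 hT2
        _ = ((n : ℝ) + 1) * (Pn * (pOpNorm p (A (n + 1)) * pOpNorm p (S (n + 1)))) * δ := by
          ring
        _ = ((n + 1 : ℕ) : ℝ) * (Pn * (pOpNorm p (A (n + 1)) * pOpNorm p (S (n + 1)))) * δ := by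
          push_cast; ring

/-- The `ℓ_p`-Lipschitz constant of the degree-`k` NCP network
`x₁ = (A₁z) ∘ s₁`, `x_n = (A_nz) ∘ (S_n x_{n-1})`, `f(z) = C x_k` on the unit `ℓ_p`-ball
is at most `k ‖C‖_p ∏_{i=1}^k ‖A_i‖_p ‖S_i‖_p`, where `‖S₁‖_p` means `‖diag(s₁)‖_p`. -/
theorem ncp_lipschitz_p (p : ℝ≥0∞) (hp : 1 ≤ p) {d m o : ℕ} (k : ℕ) (hk : 1 ≤ k)
    (C : Matrix (Fin o) (Fin m) ℝ) (A : ℕ → Matrix (Fin m) (Fin d) ℝ)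
    (S : ℕ → Matrix (Fin m) (Fin m) ℝ) (s₁ : Fin m → ℝ)
    (x : (Fin d → ℝ) → ℕ → Fin m → ℝ)
    (hx1 : ∀ z, x z 1 = fun j => (A 1).mulVec z j * s₁ j)
    (hxn : ∀ z n, 1 ≤ n →
      x z (n + 1) = fun j => (A (n + 1)).mulVec z j * (S (n + 1)).mulVec (x z n) j) :
    ∀ z₁ z₂ : Fin d → ℝ, pNorm p z₁ ≤ 1 → pNorm p z₂ ≤ 1 →
      pNorm p (C.mulVec (x z₁ k) - C.mulVec (x z₂ k)) ≤
        (k : ℝ) * pOpNorm p C *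
          (∏ i ∈ Finset.Icc 1 k,
            pOpNorm p (A i) * pOpNorm p (if i = 1 then Matrix.diagonal s₁ else S i)) *
          pNorm p (z₁ - z₂) := by
  intro z₁ z₂ hz₁ hz₂
  have key := (ncp_key p hp A S s₁ x hx1 hxn k hk).2 z₁ z₂ hz₁ hz₂
  rw [← Matrix.mulVec_sub]
  calc pNorm p (C.mulVec (x z₁ k - x z₂ k))
      ≤ pOpNorm p C * pNorm p (x z₁ k - x z₂ k) := pNorm_mulVec_le hp _ _
    _ ≤ pOpNorm p C * ((k : ℝ) * (∏ i ∈ Finset.Icc 1 k,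
          pOpNorm p (A i) * pOpNorm p (if i = 1 then Matrix.diagonal s₁ else S i)) *
          pNorm p (z₁ - z₂)) := mul_le_mul_of_nonneg_left key (pOpNorm_nonneg hp _)
    _ = (k : ℝ) * pOpNorm p C * (∏ i ∈ Finset.Icc 1 k,
          pOpNorm p (A i) * pOpNorm p (if i = 1 then Matrix.diagonal s₁ else S i)) *
          pNorm p (z₁ - z₂) := by ring
end
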